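/- Let m = 2^r with r ≥ 1, G = Z/mZ, n = m-1, and let W be the integer sequence consisting of (n-1)/2 copies of 1, (n-1)/2 copies of -1, and one 0. Let S consist of n copies of 0 and n copies of 1. Then Σ_{|W|}(W,S) = G \ {m/2}, and hence Σ_{|W|}(W,S) contains no nontrivial subgroup of G (since every nontrivial subgroup of Z/2^rZ contains the element 2^{r-1}). -/

import Mathlib

/-!
Pairing a weight with `0` contributes nothing and pairing it with `g` contributes the weight times
`g`, so every element of `Σ(W, S)` is `t • g` for a sub-sum `t` of `W`, an integer with
`|t| ≤ k = m/2 - 1`; conversely `t = p - q` is realised by pairing `p` of the `1`s and `q` of the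
`-1`s with `g`. In `ZMod (2 (k + 1))` the integers of `[-k, k]` hit every residue except `k + 1`.
A nontrivial subgroup of `ZMod (2 ^ r)` has even order, so by Cauchy it contains an element of
order `2`, and the only such element is `2 ^ (r - 1)`.
-/

/-- The set of weighted `n`-term subsequence sums `Σ_n(W,S)`. -/
def wsums (G : Type*) [AddCommGroup G] (n : ℕ) (W : Multiset ℤ) (S : Multiset G) :
    Set G :=
  { g | ∃ (w : List ℤ) (s : List G), w.length = n ∧ s.length = n ∧
      (w : Multiset ℤ) ≤ W ∧ (s : Multiset G) ≤ S ∧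
      g = ((w.zip s).map fun p => p.1 • p.2).sum }

lemma List.sum_eq_count_one_sub_count_neg_one {u : List ℤ}
    (hu : ∀ x ∈ u, x = -1 ∨ x = 0 ∨ x = 1) : u.sum = u.count 1 - u.count (-1) := by
  induction u with
  | nil => simp
  | cons a u ih =>
    rw [List.forall_mem_cons] at hu
    rcases hu.1 with rfl | rfl | rfl <;> simp [ih hu.2] <;> ring

section WeightedSum

variable {G : Type*} [AddCommGroup G]

def weightedSum (w : List ℤ) (s : List G) : G :=
  ((w.zip s).map fun p => p.1 • p.2).sum

@[simp] lemma weightedSum_nil_left (s : List G) : weightedSum [] s = 0 := rfl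

@[simp] lemma weightedSum_cons_cons (a : ℤ) (w : List ℤ) (x : G) (s : List G) :
    weightedSum (a :: w) (x :: s) = a • x + weightedSum w s := by
  simp [weightedSum]

lemma weightedSum_append {w₁ w₂ : List ℤ} {s₁ s₂ : List G} (h : w₁.length = s₁.length) :
    weightedSum (w₁ ++ w₂) (s₁ ++ s₂) = weightedSum w₁ s₁ + weightedSum w₂ s₂ := by
  simp [weightedSum, List.zip_append h]

lemma weightedSum_replicate_left (a : ℤ) {s : List G} :
    weightedSum (List.replicate s.length a) s = a • s.sum := by
  induction s with
  | nil => simp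
  | cons x s ih => simp [List.replicate_succ, ih, smul_add]

lemma exists_sublist_weightedSum_eq_smul {g : G} (w : List ℤ) {s : List G}
    (hs : ∀ x ∈ s, x = 0 ∨ x = g) : ∃ u : List ℤ, u.Sublist w ∧ weightedSum w s = u.sum • g := by
  induction w generalizing s with
  | nil => exact ⟨[], .slnil, by simp⟩
  | cons a w ih =>
    cases s with
    | nil => exact ⟨[], List.nil_sublist _, by simp [weightedSum]⟩
    | cons x s =>
      rw [List.forall_mem_cons] at hs
      obtain ⟨u, hu, hsum⟩ := ih hs.2
      rcases hs.1 with rfl | rfl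
      · exact ⟨u, hu.cons a, by simp [hsum]⟩
      · exact ⟨a :: u, hu.cons_cons a, by simp [hsum, add_smul]⟩

end WeightedSum

def balancedWeights (k : ℕ) : Multiset ℤ :=
  Multiset.replicate k 1 + Multiset.replicate k (-1) + {0}

lemma abs_sum_le_of_coe_le_balancedWeights {k : ℕ} {u : List ℤ}
    (hu : (u : Multiset ℤ) ≤ balancedWeights k) : |u.sum| ≤ k := by
  have hmem : ∀ x ∈ u, x = -1 ∨ x = 0 ∨ x = 1 := fun x hx => by
    have := Multiset.mem_of_le hu (Multiset.mem_coe.2 hx)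
    simp only [balancedWeights, Multiset.mem_add, Multiset.mem_replicate,
      Multiset.mem_singleton] at this
    omega
  have hcount (a : ℤ) (ha : a ≠ 0) : u.count a ≤ k := by
    have := Multiset.count_le_of_le a hu
    rw [Multiset.coe_count] at this
    simp only [balancedWeights, Multiset.count_add, Multiset.count_replicate,
      Multiset.count_singleton, ha, if_false, add_zero] at this
    split_ifs at this <;> omega
  rw [List.sum_eq_count_one_sub_count_neg_one hmem, abs_le]
  have h1 := hcount 1 one_ne_zero
  have h2 := hcount (-1) (by norm_num)
  omega

section

variable {G : Type*} [AddCommGroup G] (k : ℕ) (g : G)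

lemma exists_zsmul_eq_of_mem_wsums_balancedWeights {x : G}
    (hx : x ∈ wsums G (2 * k + 1) (balancedWeights k)
      (Multiset.replicate (2 * k + 1) 0 + Multiset.replicate (2 * k + 1) g)) :
    ∃ t : ℤ, |t| ≤ k ∧ x = t • g := by
  obtain ⟨w, s, -, -, hw, hs, rfl⟩ := hx
  have hs' : ∀ x ∈ s, x = 0 ∨ x = g := fun x hx => by
    rcases Multiset.mem_add.1 (Multiset.mem_of_le hs (Multiset.mem_coe.2 hx)) with h | h
    exacts [.inl (Multiset.eq_of_mem_replicate h), .inr (Multiset.eq_of_mem_replicate h)]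
  obtain ⟨u, hu, hsum⟩ := exists_sublist_weightedSum_eq_smul w hs'
  exact ⟨u.sum, abs_sum_le_of_coe_le_balancedWeights
    ((Multiset.coe_le.2 hu.subperm).trans hw), hsum⟩

lemma zsmul_mem_wsums_balancedWeights {t : ℤ} (ht : |t| ≤ k) :
    t • g ∈ wsums G (2 * k + 1) (balancedWeights k)
      (Multiset.replicate (2 * k + 1) 0 + Multiset.replicate (2 * k + 1) g) := by
  classical
  obtain ⟨p, q, hp, hq, rfl⟩ : ∃ p q : ℕ, p ≤ k ∧ q ≤ k ∧ t = p - q := by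
    refine ⟨t.toNat, (-t).toNat, ?_, ?_, ?_⟩ <;> rw [abs_le] at ht <;> omega
  -- the `1`s meet `p` copies of `g`, the `-1`s meet `q` copies, every other weight meets `0`
  let s₁ := List.replicate p g ++ List.replicate (k - p) 0
  let s₂ := List.replicate q g ++ List.replicate (k - q) 0
  have hl₁ : s₁.length = k := by simp [s₁]; omega
  have hl₂ : s₂.length = k := by simp [s₂]; omega
  refine ⟨List.replicate k 1 ++ List.replicate k (-1) ++ [0], s₁ ++ s₂ ++ [0],
    by simp; omega, by simp [hl₁, hl₂]; omega, ?_, ?_, ?_⟩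
  · simp only [balancedWeights, ← Multiset.coe_add, Multiset.coe_replicate,
      Multiset.coe_singleton, le_refl]
  · rw [Multiset.le_iff_count]
    intro a
    simp only [s₁, s₂, Multiset.coe_count, List.count_append, List.count_replicate,
      List.count_singleton, beq_iff_eq, Multiset.count_add, Multiset.count_replicate]
    split_ifs <;> omega
  · change _ = weightedSum _ _
    rw [weightedSum_append (by simp [hl₁, hl₂]), weightedSum_append (by simp [hl₁]),
      ← hl₁, weightedSum_replicate_left, hl₁, ← hl₂, weightedSum_replicate_left]
    simp [s₁, s₂, sub_eq_add_neg, add_smul]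

lemma mem_wsums_balancedWeights_iff {x : G} :
    x ∈ wsums G (2 * k + 1) (balancedWeights k)
      (Multiset.replicate (2 * k + 1) 0 + Multiset.replicate (2 * k + 1) g) ↔
    ∃ t : ℤ, |t| ≤ k ∧ x = t • g :=
  ⟨exists_zsmul_eq_of_mem_wsums_balancedWeights k g, by
    rintro ⟨t, ht, rfl⟩; exact zsmul_mem_wsums_balancedWeights k g ht⟩

end

/-- `valMinAbs` picks the representative in `(-(k+1), k+1]`, which lies in `[-k, k]` unless it is
`k + 1`. -/
lemma ZMod.exists_abs_le_intCast_eq_iff (k : ℕ) (x : ZMod (2 * (k + 1))) :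
    (∃ t : ℤ, |t| ≤ k ∧ x = t) ↔ x ≠ ((k + 1 : ℕ) : ZMod (2 * (k + 1))) := by
  constructor
  · rintro ⟨t, ht, rfl⟩ h
    have ht' := (valMinAbs_spec (t : ZMod (2 * (k + 1))) t).2 ⟨rfl, by
      rw [abs_le] at ht; push_cast; constructor <;> omega⟩
    have hk := (valMinAbs_spec ((k + 1 : ℕ) : ZMod (2 * (k + 1))) (k + 1)).2 ⟨by push_cast; rfl, by
      push_cast; constructor <;> omega⟩
    rw [h] at ht'
    rw [abs_le] at ht
    omega
  · intro hx
    refine ⟨x.valMinAbs, ?_, x.coe_valMinAbs.symm⟩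
    have hne : x.valMinAbs ≠ k + 1 := fun h => hx (by rw [← x.coe_valMinAbs, h]; push_cast; rfl)
    have := x.valMinAbs_mem_Ioc
    rw [Set.mem_Ioc] at this
    push_cast at this
    rw [abs_le]
    omega

theorem wsums_zmod_balancedWeights_eq (k : ℕ) :
    wsums (ZMod (2 * (k + 1))) (2 * k + 1) (balancedWeights k)
      (Multiset.replicate (2 * k + 1) 0 + Multiset.replicate (2 * k + 1) 1) =
    {x | x ≠ ((k + 1 : ℕ) : ZMod (2 * (k + 1)))} := by
  ext x
  rw [mem_wsums_balancedWeights_iff, Set.mem_ofPred_eq, ← ZMod.exists_abs_le_intCast_eq_iff]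
  simp only [zsmul_eq_mul, mul_one]

namespace ZMod

lemma two_mul_val_eq_of_addOrderOf_eq_two {n : ℕ} [NeZero n] {x : ZMod n}
    (hx : addOrderOf x = 2) : 2 * x.val = n := by
  have hx0 : x.val ≠ 0 := by
    rw [ne_eq, val_eq_zero]; rintro rfl; simp at hx
  have hdvd : n ∣ 2 * x.val := by
    have := addOrderOf_nsmul_eq_zero x
    rwa [hx, nsmul_eq_mul, ← natCast_zmod_val x, ← Nat.cast_mul, natCast_eq_zero_iff] at this
  obtain ⟨c, hc⟩ := hdvd
  have := x.val_lt
  rcases c with _ | _ | c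
  · omega
  · omega
  · nlinarith

lemma natCast_two_pow_pred_mem_of_ne_bot {r : ℕ} (hr : 1 ≤ r) {K : AddSubgroup (ZMod (2 ^ r))}
    (hK : K ≠ ⊥) : ((2 ^ (r - 1) : ℕ) : ZMod (2 ^ r)) ∈ K := by
  have hcard : 2 ∣ Nat.card K := by
    obtain ⟨i, -, hi⟩ := (Nat.dvd_prime_pow Nat.prime_two).1
      (Nat.card_zmod (2 ^ r) ▸ K.card_addSubgroup_dvd_card)
    have : i ≠ 0 := by rintro rfl; exact hK (K.eq_bot_of_card_eq hi)
    exact hi ▸ dvd_pow_self 2 this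
  obtain ⟨⟨x, hxK⟩, hx⟩ := exists_prime_addOrderOf_dvd_card' 2 hcard
  have hval : x.val = 2 ^ (r - 1) := by
    have := two_mul_val_eq_of_addOrderOf_eq_two (by rwa [← AddSubgroup.addOrderOf_mk x hxK])
    have : 2 ^ r = 2 * 2 ^ (r - 1) := by rw [← pow_succ', Nat.sub_add_cancel hr]
    omega
  rwa [← hval, natCast_zmod_val]

end ZMod

theorem stmt6 (r : ℕ) (hr : 1 ≤ r)
    (m n : ℕ) (hm : m = 2 ^ r) (hn : n = m - 1)
    (W : Multiset ℤ)
    (hW : W = Multiset.replicate ((n - 1) / 2) 1 +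
        Multiset.replicate ((n - 1) / 2) (-1) + {0})
    (S : Multiset (ZMod m))
    (hS : S = Multiset.replicate n (0 : ZMod m) + Multiset.replicate n 1) :
    wsums (ZMod m) (Multiset.card W) W S =
      {x : ZMod m | x ≠ ((2 ^ (r - 1) : ℕ) : ZMod m)} ∧
    ∀ K : AddSubgroup (ZMod m),
      (K : Set (ZMod m)) ⊆ wsums (ZMod m) (Multiset.card W) W S → K = ⊥ := by
  obtain ⟨k, hk⟩ : ∃ k, 2 ^ (r - 1) = k + 1 :=
    ⟨2 ^ (r - 1) - 1, (Nat.sub_add_cancel Nat.one_le_two_pow).symm⟩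
  have hmk : m = 2 * (k + 1) := by rw [hm, ← hk, ← pow_succ', Nat.sub_add_cancel hr]
  have hnk : n = 2 * k + 1 := by omega
  have hWk : W = balancedWeights k := by
    rw [hW, hnk, balancedWeights, Nat.add_sub_cancel, Nat.mul_div_cancel_left k two_pos]
  have hcard : Multiset.card W = n := by
    simp only [hWk, balancedWeights, Multiset.card_add, Multiset.card_replicate,
      Multiset.card_singleton]
    omega
  have hset : wsums (ZMod m) (Multiset.card W) W S =
      {x : ZMod m | x ≠ ((2 ^ (r - 1) : ℕ) : ZMod m)} := by
    subst hmk hnk hS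
    rw [hcard, hWk, hk]
    exact wsums_zmod_balancedWeights_eq k
  refine ⟨hset, fun K hK => ?_⟩
  subst hm
  by_contra hK0
  have := hK (ZMod.natCast_two_pow_pred_mem_of_ne_bot hr hK0)
  rw [hset] at this
  exact this rfl
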